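/- arXiv:1309.1945 — 4 statements merged into one kernel-verified Lean document; each statement's English description precedes it below -/
import Mathlib

section
/- Let A be an artinian abelian category that is O-linear over a discrete valuation ring O with uniformizer ϖ. Let Q be the full subcategory of ϖ-divisible objects (those for which ϖ·1_A is an epimorphism) and T the full subcategory of ϖ-torsion objects. Then (Q, T) is a co-hereditary torsion theory on A, i.e. (Q, T) is a torsion theory and Q is stable under quotients. -/
open CategoryTheory Limits

/-- An object `X` of an `O`-linear category is of `ϖ`-torsion if some power of `ϖ`
annihilates its identity. -/
def IsPiTorsion {O : Type*} [CommRing O] (ϖ : O) {A : Type*} [Category A] [Preadditive A]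
    [Linear O A] (X : A) : Prop :=
  ∃ N : ℕ, (ϖ ^ N : O) • (𝟙 X) = 0

/-- An object `X` is `ϖ`-divisible if multiplication by `ϖ` on `X` is an epimorphism. -/
def IsPiDivisible {O : Type*} [CommRing O] (ϖ : O) {A : Type*} [Category A] [Preadditive A]
    [Linear O A] (X : A) : Prop :=
  Epi ((ϖ : O) • (𝟙 X))

/-!
The `ϖ`-divisible part of `X` is the place where the decreasing chain of images
`im (ϖ ^ n) ⊇ im (ϖ ^ (n + 1)) ⊇ ⋯` becomes stationary, which it does since `X` is artinian.
If `im (ϖ ^ N) = im (ϖ ^ (N + 1))`, then `ϖ` maps `im (ϖ ^ N)` onto itself, and `ϖ ^ N` kills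
`X / im (ϖ ^ N)`. Orthogonality and stability under quotients only use that multiplication
by a scalar commutes with every morphism.
-/

section Linear

variable {O : Type*} [CommRing O] {A : Type*} [Category A] [Preadditive A] [Linear O A]

lemma smul_id_comp_smul_id (X : A) (a b : O) :
    (a • 𝟙 X) ≫ (b • 𝟙 X) = (a * b) • 𝟙 X := by
  rw [Linear.smul_comp, Linear.comp_smul, Category.comp_id, smul_smul]

lemma smul_id_comp_eq_comp_smul_id {X Y : A} (a : O) (f : X ⟶ Y) :
    (a • 𝟙 X) ≫ f = f ≫ (a • 𝟙 Y) := by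
  rw [Linear.smul_comp, Linear.comp_smul, Category.id_comp, Category.comp_id]

variable {ϖ : O}

lemma IsPiDivisible.epi_pow_smul_id {X : A} (hX : IsPiDivisible ϖ X) (n : ℕ) :
    Epi ((ϖ ^ n) • 𝟙 X) := by
  induction n with
  | zero => simpa using inferInstanceAs (Epi (𝟙 X))
  | succ n ih =>
    have : Epi (ϖ • 𝟙 X) := hX
    rw [pow_succ', ← smul_id_comp_smul_id]
    exact epi_comp _ _

lemma IsPiDivisible.eq_zero_of_isPiTorsion {Q T : A} (hQ : IsPiDivisible ϖ Q)
    (hT : IsPiTorsion ϖ T) (f : Q ⟶ T) : f = 0 := by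
  obtain ⟨N, hN⟩ := hT
  have := hQ.epi_pow_smul_id N
  refine zero_of_epi_comp ((ϖ ^ N) • 𝟙 Q) ?_
  rw [smul_id_comp_eq_comp_smul_id, hN, comp_zero]

lemma IsPiDivisible.of_epi {X Y : A} (p : X ⟶ Y) [Epi p] (hX : IsPiDivisible ϖ X) :
    IsPiDivisible ϖ Y := by
  have : Epi (ϖ • 𝟙 X) := hX
  have : Epi ((ϖ • 𝟙 X) ≫ p) := epi_comp _ _
  rw [smul_id_comp_eq_comp_smul_id] at this
  exact epi_of_epi p _

end Linear

section Abelian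

variable {O : Type*} [CommRing O] (ϖ : O) {A : Type*} [Category A] [Abelian A] [Linear O A]

noncomputable def powImage (X : A) (n : ℕ) : Subobject X :=
  imageSubobject ((ϖ ^ n) • 𝟙 X)

noncomputable def toPowImage (X : A) (n : ℕ) : X ⟶ powImage ϖ X n :=
  factorThruImageSubobject _

instance (X : A) (n : ℕ) : Epi (toPowImage ϖ X n) :=
  inferInstanceAs (Epi (factorThruImageSubobject _))

lemma toPowImage_arrow (X : A) (n : ℕ) :
    toPowImage ϖ X n ≫ (powImage ϖ X n).arrow = (ϖ ^ n) • 𝟙 X :=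
  imageSubobject_arrow_comp _

lemma powImage_antitone (X : A) : Antitone (powImage ϖ X) := by
  refine antitone_nat_of_succ_le fun n => ?_
  have := imageSubobject_comp_le (ϖ • 𝟙 X) ((ϖ ^ n) • 𝟙 X)
  rwa [smul_id_comp_smul_id, ← pow_succ'] at this

lemma exists_powImage_succ_eq (X : A) [IsArtinianObject X] :
    ∃ N, powImage ϖ X (N + 1) = powImage ϖ X N := by
  obtain ⟨N, hN⟩ := WellFoundedLT.antitone_chain_condition (powImage_antitone ϖ X)
  exact ⟨N, (hN (N + 1) N.le_succ).symm⟩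

variable {ϖ}

lemma isPiDivisible_powImage {X : A} {N : ℕ} (hN : powImage ϖ X (N + 1) = powImage ϖ X N) :
    IsPiDivisible ϖ (powImage ϖ X N : A) := by
  have key : toPowImage ϖ X (N + 1) ≫ (Subobject.isoOfEq _ _ hN).hom =
      toPowImage ϖ X N ≫ (ϖ • 𝟙 _) := by
    rw [← cancel_mono (powImage ϖ X N).arrow, Category.assoc, Category.assoc,
      Subobject.isoOfEq_hom, Subobject.ofLE_arrow, smul_id_comp_eq_comp_smul_id,
      toPowImage_arrow, reassoc_of% toPowImage_arrow ϖ X N, smul_id_comp_smul_id, pow_succ]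
  have : Epi (toPowImage ϖ X N ≫ (ϖ • 𝟙 _)) := by
    rw [← key]
    exact epi_comp _ _
  exact epi_of_epi (toPowImage ϖ X N) _

lemma isPiTorsion_cokernel_powImage (X : A) (N : ℕ) :
    IsPiTorsion ϖ (cokernel (powImage ϖ X N).arrow) := by
  refine ⟨N, (cancel_epi (cokernel.π _)).1 ?_⟩
  rw [← smul_id_comp_eq_comp_smul_id, comp_zero, ← toPowImage_arrow, Category.assoc,
    cokernel.condition, comp_zero]

end Abelian

/-- in an artinian `O`-linear abelian category over a discrete valuation ring `O`
with uniformizer `ϖ`, the pair (`ϖ`-divisible objects, `ϖ`-torsion objects) is a co-hereditary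
torsion theory. -/
theorem divisible_torsion_is_cohereditary_torsion_theory
    (O : Type*) [CommRing O] [IsDomain O] [IsDiscreteValuationRing O]
    (ϖ : O) (hϖ : Irreducible ϖ)
    (A : Type*) [Category A] [Abelian A] [Linear O A]
    [∀ X : A, IsArtinianObject X] :
    -- (Q, T) is a torsion theory:
    (∀ (Q T : A) (f : Q ⟶ T), IsPiDivisible ϖ Q → IsPiTorsion ϖ T → f = 0) ∧
    (∀ X : A, ∃ (Q T : A) (i : Q ⟶ X) (p : X ⟶ T) (w : i ≫ p = 0),
      IsPiDivisible ϖ Q ∧ IsPiTorsion ϖ T ∧ (ShortComplex.mk i p w).ShortExact) ∧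
    -- and it is co-hereditary: the divisible class is stable under quotients:
    (∀ (X Y : A) (p : X ⟶ Y), Epi p → IsPiDivisible ϖ X → IsPiDivisible ϖ Y) := by
  refine ⟨fun Q T f hQ hT => hQ.eq_zero_of_isPiTorsion hT f, fun X => ?_,
    fun X Y p _ hX => hX.of_epi p⟩
  obtain ⟨N, hN⟩ := exists_powImage_succ_eq ϖ X
  exact ⟨_, _, (powImage ϖ X N).arrow, cokernel.π _, cokernel.condition _,
    isPiDivisible_powImage hN, isPiTorsion_cokernel_powImage X N,
    ⟨ShortComplex.exact_of_g_is_cokernel _ (cokernelIsCokernel _)⟩⟩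
end

section
/- Let D be a triangulated category with t-structure whose heart C is O-linear, and let F := D^{≤0} ∩ ⁺D^{≥0} = C ∩ ⁺C be the full subcategory of ϖ-torsion-free objects of C (equivalently ϖ-divisible objects of the tilted heart ⁺C). Then F admits kernels and cokernels: for a morphism f : L → L' in F, the kernel of f in C lies in F and is a kernel of f in F, and the cokernel of f in ⁺C lies in F and is a cokernel of f in F. -/
/-! The tilted t-structure satisfies `t.le 0 ⊆ t'.le 0 ⊆ t.le 1` and
`t.ge 1 ⊆ t'.ge 0 ⊆ t.ge 0`. Let `K ↪ L` be a monomorphism in the heart of `t` with `L` in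
`t'.ge 0`, and `g : A ⟶ K` with `A` in `t'.le (-1) ⊆ t.le 0`. Then `g` factors through `τ≥0 A`,
which lies in the heart of `t`; the composite `τ≥0 A ⟶ K ⟶ L` vanishes because `Hom(A, L) = 0`
and maps out of `τ≥0 A` are determined on `A`, so `g = 0`. Hence `K` lies in `t'.ge 0`, and in
`t.le 0 ⊆ t'.le 0`, i.e. in `F`. Dually, a quotient in the heart of `t'` of an object of
`t.le 0` lies in `t.le 0`, via `τ≤0` for `t'`. As `F` is full in both hearts, the kernel and the
cokernel keep their universal properties in `F`. -/

open CategoryTheory Limits Triangulated Pretriangulated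

variable {O : Type*} [CommRing O] [IsDomain O] [IsDiscreteValuationRing O]
variable {D : Type*} [Category D] [Preadditive D] [Linear O D] [HasZeroObject D]
  [HasShift D ℤ] [∀ n : ℤ, (CategoryTheory.shiftFunctor D n).Additive] [Pretriangulated D]

/-- The cohomology functors associated to a t-structure with their characteristic
properties. -/
structure TCohomology (t : TStructure D) where
  H : ℤ → D ⥤ D
  mem_heart_LE : ∀ (n : ℤ) (X : D), t.le 0 ((H n).obj X)
  mem_heart_GE : ∀ (n : ℤ) (X : D), t.ge 0 ((H n).obj X)
  le_iff : ∀ (n : ℤ) (X : D), t.le n X ↔ ∀ i : ℤ, n < i → IsZero ((H i).obj X)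
  ge_iff : ∀ (n : ℤ) (X : D), t.ge n X ↔ ∀ i : ℤ, i < n → IsZero ((H i).obj X)

/-- The heart of a t-structure, as a predicate on objects. -/
def heartPred (t : TStructure D) : D → Prop := fun X => t.le 0 X ∧ t.ge 0 X


namespace CategoryTheory.ObjectProperty.FullSubcategory

variable {C : Type*} [Category C] [HasZeroMorphisms C] {P : ObjectProperty C}
  [HasZeroMorphisms P.FullSubcategory]

/- The instance `HasZeroMorphisms P.FullSubcategory` is arbitrary (e.g. part of some `Abelian`
structure on a heart), not the one induced from `C`. -/
lemma hom_zero_eq_zero (X Y : P.FullSubcategory) : (0 : X ⟶ Y).hom = 0 := by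
  rw [← (zero_comp : (0 : X ⟶ Y) ≫ ObjectProperty.homMk (0 : Y.obj ⟶ Y.obj) = 0)]
  exact comp_zero

lemma eq_zero_of_comp_hom_eq_zero {X Y W : P.FullSubcategory} (ι : Y ⟶ W) [Mono ι]
    {h : X.obj ⟶ Y.obj} (hh : h ≫ ι.hom = 0) : h = 0 := by
  have : ObjectProperty.homMk h ≫ ι = 0 :=
    ObjectProperty.hom_ext _ (hh.trans (hom_zero_eq_zero X W).symm)
  exact (congrArg InducedCategory.Hom.hom (zero_of_comp_mono ι this)).trans
    (hom_zero_eq_zero X Y)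

lemma eq_zero_of_hom_comp_eq_zero {X Y W : P.FullSubcategory} (π : X ⟶ Y) [Epi π]
    {h : Y.obj ⟶ W.obj} (hh : π.hom ≫ h = 0) : h = 0 := by
  have : π ≫ ObjectProperty.homMk h = 0 :=
    ObjectProperty.hom_ext _ (hh.trans (hom_zero_eq_zero X W).symm)
  exact (congrArg InducedCategory.Hom.hom (zero_of_epi_comp π this)).trans
    (hom_zero_eq_zero Y W)

variable {L L' : P.FullSubcategory} (f : L ⟶ L')

lemma kernel_ι_hom_comp_hom [HasKernel f] : (kernel.ι f).hom ≫ f.hom = 0 :=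
  (congrArg InducedCategory.Hom.hom (kernel.condition f)).trans (hom_zero_eq_zero _ _)

lemma existsUnique_kernel_lift_hom [HasKernel f] {X : C} (hX : P X) (g : X ⟶ L.obj)
    (hg : g ≫ f.hom = 0) : ∃! u : X ⟶ (kernel f).obj, u ≫ (kernel.ι f).hom = g := by
  let X' : P.FullSubcategory := ⟨X, hX⟩
  have hg' : (ObjectProperty.homMk g : X' ⟶ L) ≫ f = 0 :=
    ObjectProperty.hom_ext _ (hg.trans (hom_zero_eq_zero X' L').symm)
  refine ⟨(kernel.lift f _ hg').hom, congrArg InducedCategory.Hom.hom (kernel.lift_ι f _ hg'),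
    fun u hu => ?_⟩
  have : (ObjectProperty.homMk u : X' ⟶ kernel f) ≫ kernel.ι f =
      kernel.lift f _ hg' ≫ kernel.ι f := by
    rw [kernel.lift_ι]
    exact ObjectProperty.hom_ext _ hu
  exact congrArg InducedCategory.Hom.hom ((cancel_mono (kernel.ι f)).1 this)

lemma hom_comp_cokernel_π_hom [HasCokernel f] : f.hom ≫ (cokernel.π f).hom = 0 :=
  (congrArg InducedCategory.Hom.hom (cokernel.condition f)).trans (hom_zero_eq_zero _ _)

lemma existsUnique_cokernel_desc_hom [HasCokernel f] {X : C} (hX : P X) (g : L'.obj ⟶ X)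
    (hg : f.hom ≫ g = 0) : ∃! u : (cokernel f).obj ⟶ X, (cokernel.π f).hom ≫ u = g := by
  let X' : P.FullSubcategory := ⟨X, hX⟩
  have hg' : f ≫ (ObjectProperty.homMk g : L' ⟶ X') = 0 :=
    ObjectProperty.hom_ext _ (hg.trans (hom_zero_eq_zero L X').symm)
  refine ⟨(cokernel.desc f _ hg').hom,
    congrArg InducedCategory.Hom.hom (cokernel.π_desc f _ hg'), fun u hu => ?_⟩
  have : cokernel.π f ≫ (ObjectProperty.homMk u : cokernel f ⟶ X') =
      cokernel.π f ≫ cokernel.desc f _ hg' := by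
    rw [cokernel.π_desc]
    exact ObjectProperty.hom_ext _ hu
  exact congrArg InducedCategory.Hom.hom ((cancel_epi (cokernel.π f)).1 this)

end CategoryTheory.ObjectProperty.FullSubcategory

namespace CategoryTheory.Triangulated.TStructure

variable {C : Type*} [Category C] [Preadditive C] [HasZeroObject C] [HasShift C ℤ]
  [∀ n : ℤ, (shiftFunctor C n).Additive] [Pretriangulated C] (t : TStructure C)

lemma isLE_truncGE_obj_of_isLE (X : C) (a b : ℤ) [t.IsLE X b] :
    t.IsLE ((t.truncGE a).obj X) b :=
  have : t.IsLE (((t.truncLT a).obj X)⟦(1 : ℤ)⟧) (b - 1) := t.isLE_shift _ b 1 (b - 1)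
  t.isLE₂ _ (rot_of_distTriang _ (t.triangleLTGE_distinguished a X)) b
    (show t.IsLE X b from inferInstance)
    (show t.IsLE (((t.truncLT a).obj X)⟦(1 : ℤ)⟧) b from t.isLE_of_le _ (b - 1) b)

lemma isGE_truncLT_obj_of_isGE (X : C) (a b : ℤ) [t.IsGE X a] :
    t.IsGE ((t.truncLT b).obj X) a :=
  have : t.IsGE (((t.truncGE b).obj X)⟦(-1 : ℤ)⟧) (a + 1) := t.isGE_shift _ a (-1) (a + 1)
  t.isGE₂ _ (inv_rot_of_distTriang _ (t.triangleLTGE_distinguished b X)) a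
    (show t.IsGE (((t.truncGE b).obj X)⟦(-1 : ℤ)⟧) a from t.isGE_of_ge _ a (a + 1))
    (show t.IsGE X a from inferInstance)

end CategoryTheory.Triangulated.TStructure

section Heart

open ObjectProperty.FullSubcategory

variable {t t' : TStructure D}

lemma isGE_zero_of_mono_of_heartPred (hle : ∀ X, t'.le 0 X → t.le 1 X)
    [HasZeroMorphisms (ObjectProperty.FullSubcategory (heartPred t))]
    {K L : ObjectProperty.FullSubcategory (heartPred t)} (ι : K ⟶ L) [Mono ι]
    (hL : t'.ge 0 L.obj) : t'.ge 0 K.obj := by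
  have : t.IsGE K.obj 0 := ⟨K.property.2⟩
  have : t.IsGE L.obj 0 := ⟨L.property.2⟩
  have : t'.IsGE L.obj 0 := ⟨hL⟩
  rw [t'.ge_iff_isGE, t'.isGE_iff_orthogonal (-1) 0 (by lia)]
  intro A g hA
  have : t.IsLE A 0 := by
    rw [← t.isLE_shift_iff A 0 (-1) 1, ← t.le_iff_isLE]
    exact hle _ ((t'.le_iff_isLE _ _).2 (t'.isLE_shift A (-1) (-1) 0))
  let A' : ObjectProperty.FullSubcategory (heartPred t) :=
    ⟨(t.truncGE 0).obj A, (t.isLE_truncGE_obj_of_isLE A 0 0).le,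
      (inferInstance : t.IsGE _ 0).ge⟩
  have hι : t.descTruncGE g 0 ≫ ι.hom = 0 := t.from_truncGE_obj_ext (by
    rw [← Category.assoc, t.π_descTruncGE, comp_zero]
    exact t'.zero_of_isLE_of_isGE _ (-1) 0 (by lia) hA inferInstance)
  rw [← t.π_descTruncGE g 0, eq_zero_of_comp_hom_eq_zero (X := A') ι hι, comp_zero]

lemma isLE_zero_of_epi_of_heartPred (hge : ∀ X, t.ge 1 X → t'.ge 0 X)
    [HasZeroMorphisms (ObjectProperty.FullSubcategory (heartPred t'))]
    {L Q : ObjectProperty.FullSubcategory (heartPred t')} (π : L ⟶ Q) [Epi π]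
    (hL : t.le 0 L.obj) : t.le 0 Q.obj := by
  have : t'.IsLE Q.obj 0 := ⟨Q.property.1⟩
  have : t'.IsLE L.obj (1 - 1) := ⟨L.property.1⟩
  have : t.IsLE L.obj 0 := ⟨hL⟩
  rw [t.le_iff_isLE, t.isLE_iff_orthogonal 0 1 (by lia)]
  intro B g hB
  have : t'.IsGE B 0 := ⟨hge B hB.ge⟩
  let B' : ObjectProperty.FullSubcategory (heartPred t') :=
    ⟨(t'.truncLT 1).obj B, (t'.isLE_truncLT_obj B 1 0).le,
      (t'.isGE_truncLT_obj_of_isGE B 0 1).ge⟩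
  have hπ : π.hom ≫ t'.liftTruncLT g 0 1 (by lia) = 0 := t'.to_truncLT_obj_ext (by
    rw [Category.assoc, t'.liftTruncLT_ι, zero_comp]
    exact t.zero_of_isLE_of_isGE _ 0 1 (by lia) inferInstance hB)
  rw [← t'.liftTruncLT_ι g 0 1 (by lia), eq_zero_of_hom_comp_eq_zero (W := B') π hπ,
    zero_comp]

end Heart

section Tilt

variable {R : Type*} [Semiring R] [Linear R D] {t t' : TStructure D} (c : TCohomology t)
  {ϖ : R}

lemma tilt_le_zero_of_le_zero
    (ht'le : ∀ X, (t.le 1 X ∧ ∃ N : ℕ, (ϖ ^ N : R) • 𝟙 ((c.H 1).obj X) = 0) → t'.le 0 X)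
    {X : D} (hX : t.le 0 X) : t'.le 0 X :=
  ht'le X ⟨t.le_monotone (by lia) _ hX, 0, ((c.le_iff 0 X).1 hX 1 (by lia)).eq_of_src _ _⟩

lemma tilt_ge_zero_of_ge_one
    (ht'ge : ∀ X, (t.ge 0 X ∧ Mono (ϖ • 𝟙 ((c.H 0).obj X))) → t'.ge 0 X)
    {X : D} (hX : t.ge 1 X) : t'.ge 0 X :=
  ht'ge X ⟨t.ge_antitone (by lia) _ hX, ((c.ge_iff 1 X).1 hX 0 (by lia)).mono _⟩

end Tilt

theorem free_category_has_kernels_and_cokernels_general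
    (ϖ : O)
    (t t' : TStructure D) (c : TCohomology t)
    [Abelian (ObjectProperty.FullSubcategory (heartPred t))] [Abelian (ObjectProperty.FullSubcategory (heartPred t'))]
    -- `t'` is the tilt of `t` at the `ϖ`-torsion theory of its heart:
    (ht'le : ∀ X : D, t'.le 0 X ↔
      (t.le 1 X ∧ ∃ N : ℕ, (ϖ ^ N : O) • (𝟙 ((c.H 1).obj X)) = 0))
    (ht'ge : ∀ X : D, t'.ge 0 X ↔
      (t.ge 0 X ∧ Mono ((ϖ : O) • (𝟙 ((c.H 0).obj X)))))
    (L L' : D) (hL : heartPred t L ∧ heartPred t' L)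
    (hL' : heartPred t L' ∧ heartPred t' L') (f : L ⟶ L') :
    -- the kernel computed in C:
    (let fC : (⟨L, hL.1⟩ : ObjectProperty.FullSubcategory (heartPred t)) ⟶ ⟨L', hL'.1⟩ := ObjectProperty.homMk f
     let ι : (kernel fC).obj ⟶ L := (kernel.ι fC).hom
     heartPred t' (kernel fC).obj ∧
     (ι ≫ f = 0) ∧
     (∀ (X : D), (heartPred t X ∧ heartPred t' X) → ∀ (g : X ⟶ L), g ≫ f = 0 →
       ∃! u : X ⟶ (kernel fC).obj, u ≫ ι = g)) ∧
    -- the cokernel computed in ⁺C: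
    (let fP : (⟨L, hL.2⟩ : ObjectProperty.FullSubcategory (heartPred t')) ⟶ ⟨L', hL'.2⟩ := ObjectProperty.homMk f
     let π : L' ⟶ (cokernel fP).obj := (cokernel.π fP).hom
     heartPred t (cokernel fP).obj ∧
     (f ≫ π = 0) ∧
     (∀ (X : D), (heartPred t X ∧ heartPred t' X) → ∀ (g : L' ⟶ X), f ≫ g = 0 →
       ∃! u : (cokernel fP).obj ⟶ X, π ≫ u = g)) := by
  have hle (X : D) (hX : t'.le 0 X) : t.le 1 X := ((ht'le X).1 hX).1
  have hge (X : D) (hX : t.ge 1 X) : t'.ge 0 X := tilt_ge_zero_of_ge_one c (ht'ge · |>.2) hX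
  refine ⟨?_, ?_⟩
  · intro fC ι
    exact ⟨⟨tilt_le_zero_of_le_zero c (ht'le · |>.2) (kernel fC).property.1,
        isGE_zero_of_mono_of_heartPred hle (kernel.ι fC) hL.2.2⟩,
      ObjectProperty.FullSubcategory.kernel_ι_hom_comp_hom fC, fun X hX g hg =>
        ObjectProperty.FullSubcategory.existsUnique_kernel_lift_hom fC hX.1 g hg⟩
  · intro fP π
    exact ⟨⟨isLE_zero_of_epi_of_heartPred hge (cokernel.π fP) hL'.1.1,
        ((ht'ge _).1 (cokernel fP).property.2).1⟩,
      ObjectProperty.FullSubcategory.hom_comp_cokernel_π_hom fP, fun X hX g hg =>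
        ObjectProperty.FullSubcategory.existsUnique_cokernel_desc_hom fP hX.2 g hg⟩

/-- let `C` be the heart of a t-structure on an `O`-linear triangulated
category, `⁺C` the heart of the tilted t-structure (for the `ϖ`-torsion theory) and
`F = C ∩ ⁺C` the full subcategory of `ϖ`-torsion-free ("free") objects.  Then `F` admits
kernels and cokernels: for `f : L ⟶ L'` in `F`, the kernel of `f` computed in `C` lies in
`F` and is a kernel of `f` in `F`, and the cokernel of `f` computed in `⁺C` lies in `F` and
is a cokernel of `f` in `F`. -/
theorem free_category_has_kernels_and_cokernels
    (ϖ : O) (hϖ : Irreducible ϖ)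
    (t t' : TStructure D) (c : TCohomology t)
    [Abelian (ObjectProperty.FullSubcategory (heartPred t))] [Abelian (ObjectProperty.FullSubcategory (heartPred t'))]
    -- `t'` is the tilt of `t` at the `ϖ`-torsion theory of its heart:
    (ht'le : ∀ X : D, t'.le 0 X ↔
      (t.le 1 X ∧ ∃ N : ℕ, (ϖ ^ N : O) • (𝟙 ((c.H 1).obj X)) = 0))
    (ht'ge : ∀ X : D, t'.ge 0 X ↔
      (t.ge 0 X ∧ Mono ((ϖ : O) • (𝟙 ((c.H 0).obj X)))))
    (L L' : D) (hL : heartPred t L ∧ heartPred t' L)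
    (hL' : heartPred t L' ∧ heartPred t' L') (f : L ⟶ L') :
    -- the kernel computed in C:
    (let fC : (⟨L, hL.1⟩ : ObjectProperty.FullSubcategory (heartPred t)) ⟶ ⟨L', hL'.1⟩ := ObjectProperty.homMk f
     let ι : (kernel fC).obj ⟶ L := (kernel.ι fC).hom
     heartPred t' (kernel fC).obj ∧
     (ι ≫ f = 0) ∧
     (∀ (X : D), (heartPred t X ∧ heartPred t' X) → ∀ (g : X ⟶ L), g ≫ f = 0 →
       ∃! u : X ⟶ (kernel fC).obj, u ≫ ι = g)) ∧
    -- the cokernel computed in ⁺C: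
    (let fP : (⟨L, hL.2⟩ : ObjectProperty.FullSubcategory (heartPred t')) ⟶ ⟨L', hL'.2⟩ := ObjectProperty.homMk f
     let π : L' ⟶ (cokernel fP).obj := (cokernel.π fP).hom
     heartPred t (cokernel fP).obj ∧
     (f ≫ π = 0) ∧
     (∀ (X : D), (heartPred t X ∧ heartPred t' X) → ∀ (g : L' ⟶ X), f ≫ g = 0 →
       ∃! u : (cokernel fP).obj ⟶ X, π ≫ u = g)) :=
  free_category_has_kernels_and_cokernels_general ϖ t t' c ht'le ht'ge L L' hL hL' f
end

section
/- In a quasi-abelian category, if u ∘ v is a strict monomorphism then v is a strict monomorphism; dually, if u ∘ v is a strict epimorphism then u is a strict epimorphism. Moreover the composite of two strict monomorphisms (resp. strict epimorphisms) is strict. -/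
open CategoryTheory Limits

/-- A morphism is strict if the canonical comparison `Coim f ⟶ Im f` is an isomorphism. -/
def IsStrict {C : Type*} [Category C] [HasZeroMorphisms C] [HasKernels C] [HasCokernels C]
    {X Y : C} (f : X ⟶ Y) : Prop :=
  IsIso (Abelian.coimageImageComparison f)

/-- A quasi-abelian category (Schneiders): an additive category with kernels and cokernels
in which strict epimorphisms are stable under pullback and strict monomorphisms are stable
under pushout. -/
class QuasiAbelian (C : Type*) [Category C] [Preadditive C] : Prop where
  [hasKernels : HasKernels C]
  [hasCokernels : HasCokernels C]
  pullback_stable : ∀ {P X Y Z : C} (fst : P ⟶ X) (snd : P ⟶ Y) (f : X ⟶ Z) (g : Y ⟶ Z),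
    IsPullback fst snd f g → Epi g → IsStrict g → (Epi fst ∧ IsStrict fst)
  pushout_stable : ∀ {Z X Y Q : C} (f : Z ⟶ X) (g : Z ⟶ Y) (inl : X ⟶ Q) (inr : Y ⟶ Q),
    IsPushout f g inl inr → Mono f → IsStrict f → (Mono inr ∧ IsStrict inr)

attribute [instance] QuasiAbelian.hasKernels QuasiAbelian.hasCokernels

namespace QAHelpers

variable {C : Type*} [Category C] [HasZeroMorphisms C] [HasKernels C] [HasCokernels C]

lemma fac_epi {Y Z : C} (g : Y ⟶ Z) :
    cokernel.π (kernel.ι g) ≫ Abelian.coimageImageComparison g ≫ kernel.ι (cokernel.π g) = g :=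
  Abelian.coimage_image_factorisation g

lemma fac_mono {X Y : C} (f : X ⟶ Y) :
    (cokernel.π (kernel.ι f) ≫ Abelian.coimageImageComparison f) ≫ kernel.ι (cokernel.π f)
      = f := by
  rw [Category.assoc]; exact Abelian.coimage_image_factorisation f

lemma cokernel_π_eq_zero {Y Z : C} (g : Y ⟶ Z) [Epi g] : cokernel.π g = 0 :=
  (cancel_epi g).1 (by rw [cokernel.condition, comp_zero])

lemma kernel_ι_eq_zero {X Y : C} (f : X ⟶ Y) [Mono f] : kernel.ι f = 0 :=
  (cancel_mono f).1 (by rw [kernel.condition, zero_comp])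

/-- Easy direction: a strict epi factors any morphism killing its kernel. -/
lemma factors_of_isStrict_epi {Y Z : C} (g : Y ⟶ Z) [Epi g] (hs : IsStrict g)
    {T : C} (t : Y ⟶ T) (ht : kernel.ι g ≫ t = 0) : ∃ h : Z ⟶ T, t = g ≫ h := by
  haveI hc : IsIso (Abelian.coimageImageComparison g) := hs
  haveI hι : IsIso (kernel.ι (cokernel.π g)) := by
    refine ⟨kernel.lift _ (𝟙 Z) (by rw [Category.id_comp, cokernel_π_eq_zero g]), ?_, by simp⟩
    rw [← cancel_mono (kernel.ι (cokernel.π g))]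
    simp
  have key : g ≫ inv (kernel.ι (cokernel.π g)) ≫ inv (Abelian.coimageImageComparison g)
      = cokernel.π (kernel.ι g) := by
    rw [← Category.assoc, IsIso.comp_inv_eq, IsIso.comp_inv_eq]
    exact (fac_mono g).symm
  refine ⟨inv (kernel.ι (cokernel.π g)) ≫ inv (Abelian.coimageImageComparison g) ≫
      cokernel.desc (kernel.ι g) t ht, ?_⟩
  calc t = cokernel.π (kernel.ι g) ≫ cokernel.desc (kernel.ι g) t ht :=
        (cokernel.π_desc _ _ _).symm
    _ = (g ≫ inv (kernel.ι (cokernel.π g)) ≫ inv (Abelian.coimageImageComparison g)) ≫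
          cokernel.desc (kernel.ι g) t ht := by rw [key]
    _ = g ≫ inv (kernel.ι (cokernel.π g)) ≫ inv (Abelian.coimageImageComparison g) ≫
          cokernel.desc (kernel.ι g) t ht := by simp only [Category.assoc]

/-- Criterion: an epi which factors everything killing its kernel is strict. -/
lemma isStrict_epi_of_factors {Y Z : C} (g : Y ⟶ Z) [Epi g]
    (H : ∀ {T : C} (t : Y ⟶ T), kernel.ι g ≫ t = 0 → ∃ h : Z ⟶ T, t = g ≫ h) :
    IsStrict g := by
  obtain ⟨h, hh⟩ := H (cokernel.π (kernel.ι g)) (cokernel.condition _)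
  have hq1 : h ≫ (Abelian.coimageImageComparison g ≫ kernel.ι (cokernel.π g)) = 𝟙 Z := by
    rw [← cancel_epi g, ← Category.assoc, ← hh, fac_epi g, Category.comp_id]
  have hq2 : (Abelian.coimageImageComparison g ≫ kernel.ι (cokernel.π g)) ≫ h
      = 𝟙 (cokernel (kernel.ι g)) := by
    rw [← cancel_epi (cokernel.π (kernel.ι g)), ← Category.assoc, fac_epi g, ← hh,
      Category.comp_id]
  refine ⟨kernel.ι (cokernel.π g) ≫ h, ?_, ?_⟩
  · rw [← Category.assoc]; exact hq2
  · rw [← cancel_mono (kernel.ι (cokernel.π g)), Category.id_comp, Category.assoc,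
      Category.assoc, hq1, Category.comp_id]

/-- Easy direction: a strict mono cofactors any morphism killed by its cokernel. -/
lemma factors_of_isStrict_mono {X Y : C} (f : X ⟶ Y) [Mono f] (hs : IsStrict f)
    {T : C} (t : T ⟶ Y) (ht : t ≫ cokernel.π f = 0) : ∃ h : T ⟶ X, t = h ≫ f := by
  haveI hc : IsIso (Abelian.coimageImageComparison f) := hs
  haveI hπ : IsIso (cokernel.π (kernel.ι f)) := by
    refine ⟨cokernel.desc _ (𝟙 X) (by rw [Category.comp_id, kernel_ι_eq_zero f]), by simp, ?_⟩
    rw [← cancel_epi (cokernel.π (kernel.ι f))]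
    simp
  have key : inv (cokernel.π (kernel.ι f)) ≫ f
      = Abelian.coimageImageComparison f ≫ kernel.ι (cokernel.π f) := by
    rw [IsIso.inv_comp_eq]
    exact (fac_epi f).symm
  refine ⟨kernel.lift (cokernel.π f) t ht ≫ inv (Abelian.coimageImageComparison f) ≫
      inv (cokernel.π (kernel.ι f)), ?_⟩
  calc t = kernel.lift (cokernel.π f) t ht ≫ kernel.ι (cokernel.π f) :=
        (kernel.lift_ι _ _ _).symm
    _ = kernel.lift (cokernel.π f) t ht ≫ inv (Abelian.coimageImageComparison f) ≫
          Abelian.coimageImageComparison f ≫ kernel.ι (cokernel.π f) := by simp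
    _ = kernel.lift (cokernel.π f) t ht ≫ inv (Abelian.coimageImageComparison f) ≫
          inv (cokernel.π (kernel.ι f)) ≫ f := by rw [key]
    _ = (kernel.lift (cokernel.π f) t ht ≫ inv (Abelian.coimageImageComparison f) ≫
          inv (cokernel.π (kernel.ι f))) ≫ f := by simp only [Category.assoc]

/-- Criterion: a mono through which everything killed by its cokernel factors is strict. -/
lemma isStrict_mono_of_factors {X Y : C} (f : X ⟶ Y) [Mono f]
    (H : ∀ {T : C} (t : T ⟶ Y), t ≫ cokernel.π f = 0 → ∃ h : T ⟶ X, t = h ≫ f) :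
    IsStrict f := by
  obtain ⟨h, hh⟩ := H (kernel.ι (cokernel.π f)) (kernel.condition _)
  have hq1 : (cokernel.π (kernel.ι f) ≫ Abelian.coimageImageComparison f) ≫ h = 𝟙 X := by
    rw [← cancel_mono f, Category.assoc, ← hh, Category.id_comp]
    exact fac_mono f
  have hq2 : h ≫ (cokernel.π (kernel.ι f) ≫ Abelian.coimageImageComparison f)
      = 𝟙 (kernel (cokernel.π f)) := by
    rw [← cancel_mono (kernel.ι (cokernel.π f)), Category.assoc, fac_mono f, ← hh,
      Category.id_comp]
  refine ⟨h ≫ cokernel.π (kernel.ι f), ?_, ?_⟩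
  · rw [← cancel_epi (cokernel.π (kernel.ι f)), Category.comp_id, ← Category.assoc,
      ← Category.assoc, hq1, Category.id_comp]
  · rw [Category.assoc]; exact hq2

lemma cokernel_π_isStrict {X Y : C} (f : X ⟶ Y) : IsStrict (cokernel.π f) := by
  apply isStrict_epi_of_factors
  intro T t ht
  have hf : f ≫ t = 0 := by
    rw [← kernel.lift_ι (cokernel.π f) f (cokernel.condition f), Category.assoc, ht, comp_zero]
  exact ⟨cokernel.desc f t hf, (cokernel.π_desc f t hf).symm⟩

lemma kernel_ι_isStrict {X Y : C} (f : X ⟶ Y) : IsStrict (kernel.ι f) := by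
  apply isStrict_mono_of_factors
  intro T t ht
  have hf : t ≫ f = 0 := by
    rw [← cokernel.π_desc (kernel.ι f) f (kernel.condition f), ← Category.assoc, ht, zero_comp]
  exact ⟨kernel.lift f t hf, (kernel.lift_ι f t hf).symm⟩

end QAHelpers

namespace QAHelpers

variable {C : Type*} [Category C] [Preadditive C] [QuasiAbelian C]

/-- Composite of strict epis is a strict epi. -/
lemma strictEpi_comp {X Y Z : C} (v : X ⟶ Y) (u : Y ⟶ Z) [Epi v] [Epi u]
    (hv : IsStrict v) (hu : IsStrict u) : IsStrict (v ≫ u) := by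
  apply isStrict_epi_of_factors
  intro T t ht
  -- `t` kills the kernel of `v`
  have hkv : kernel.ι v ≫ t = 0 := by
    have h1 : (kernel.ι v) ≫ (v ≫ u) = 0 := by
      rw [← Category.assoc, kernel.condition, zero_comp]
    rw [← kernel.lift_ι (v ≫ u) (kernel.ι v) h1, Category.assoc, ht, comp_zero]
  obtain ⟨t', ht'⟩ := factors_of_isStrict_epi v hv t hkv
  -- the pullback of `kernel.ι u` along `v` is `kernel (v ≫ u)`
  have h2 : (kernel.ι (v ≫ u) ≫ v) ≫ u = 0 := by
    rw [Category.assoc]; exact kernel.condition _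
  have heq : kernel.lift u (kernel.ι (v ≫ u) ≫ v) h2 ≫ kernel.ι u = kernel.ι (v ≫ u) ≫ v :=
    kernel.lift_ι _ _ _
  have pb : IsPullback (kernel.lift u (kernel.ι (v ≫ u) ≫ v) h2) (kernel.ι (v ≫ u))
      (kernel.ι u) v := by
    refine IsPullback.of_isLimit (PullbackCone.IsLimit.mk heq
      (fun s => kernel.lift (v ≫ u) s.snd ?_) (fun s => ?_) (fun s => kernel.lift_ι _ _ _)
      (fun s m hm1 hm2 => ?_))
    · rw [← Category.assoc, ← s.condition, Category.assoc, kernel.condition, comp_zero]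
    · rw [← cancel_mono (kernel.ι u), Category.assoc, heq, ← Category.assoc,
        kernel.lift_ι, s.condition]
    · rw [← cancel_mono (kernel.ι (v ≫ u)), hm2, kernel.lift_ι]
  obtain ⟨hfe, -⟩ := QuasiAbelian.pullback_stable _ _ _ _ pb ‹Epi v› hv
  have hku : kernel.ι u ≫ t' = 0 := by
    haveI := hfe
    rw [← cancel_epi (kernel.lift u (kernel.ι (v ≫ u) ≫ v) h2), comp_zero, ← Category.assoc,
      heq, Category.assoc, ← ht', ht]
  obtain ⟨h, hh⟩ := factors_of_isStrict_epi u hu t' hku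
  exact ⟨h, by rw [ht', hh, Category.assoc]⟩

/-- Composite of strict monos is a strict mono. -/
lemma strictMono_comp {X Y Z : C} (v : X ⟶ Y) (u : Y ⟶ Z) [Mono v] [Mono u]
    (hv : IsStrict v) (hu : IsStrict u) : IsStrict (v ≫ u) := by
  apply isStrict_mono_of_factors
  intro T t ht
  have hcu : t ≫ cokernel.π u = 0 := by
    have h1 : (v ≫ u) ≫ cokernel.π u = 0 := by
      rw [Category.assoc, cokernel.condition, comp_zero]
    rw [← cokernel.π_desc (v ≫ u) (cokernel.π u) h1, ← Category.assoc, ht, zero_comp]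
  obtain ⟨t', ht'⟩ := factors_of_isStrict_mono u hu t hcu
  -- the pushout of `cokernel.π v` along `u` is `cokernel (v ≫ u)`
  have h2 : v ≫ (u ≫ cokernel.π (v ≫ u)) = 0 := by
    rw [← Category.assoc]; exact cokernel.condition _
  have heq : cokernel.π v ≫ cokernel.desc v (u ≫ cokernel.π (v ≫ u)) h2
      = u ≫ cokernel.π (v ≫ u) := cokernel.π_desc _ _ _
  have po : IsPushout u (cokernel.π v) (cokernel.π (v ≫ u))
      (cokernel.desc v (u ≫ cokernel.π (v ≫ u)) h2) := by
    refine IsPushout.of_isColimit (PushoutCocone.IsColimit.mk heq.symm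
      (fun s => cokernel.desc (v ≫ u) s.inl ?_) (fun s => cokernel.π_desc _ _ _)
      (fun s => ?_) (fun s m hm1 hm2 => ?_))
    · rw [Category.assoc, s.condition, ← Category.assoc, cokernel.condition, zero_comp]
    · rw [← cancel_epi (cokernel.π v), ← Category.assoc, heq, Category.assoc,
        cokernel.π_desc, s.condition]
    · rw [← cancel_epi (cokernel.π (v ≫ u)), hm1, cokernel.π_desc]
  obtain ⟨hmi, -⟩ := QuasiAbelian.pushout_stable _ _ _ _ po ‹Mono u› hu
  have hcv : t' ≫ cokernel.π v = 0 := by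
    haveI := hmi
    rw [← cancel_mono (cokernel.desc v (u ≫ cokernel.π (v ≫ u)) h2), zero_comp,
      Category.assoc, heq, ← Category.assoc, ← ht', ht]
  obtain ⟨h, hh⟩ := factors_of_isStrict_mono v hv t' hcv
  exact ⟨h, by rw [ht', hh, Category.assoc]⟩

/-- If `v ≫ u` is a strict epi then `u` is a strict epi. -/
lemma strictEpi_cancel {X Y Z : C} (v : X ⟶ Y) (u : Y ⟶ Z) [Epi (v ≫ u)]
    (hw : IsStrict (v ≫ u)) : IsStrict u := by
  haveI : Epi u := epi_of_epi v u
  -- the map `h : Z ⟶ coimage u` splitting `q := comparison ≫ image.ι`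
  have hkw : kernel.ι (v ≫ u) ≫ (v ≫ cokernel.π (kernel.ι u)) = 0 := by
    have h1 : (kernel.ι (v ≫ u) ≫ v) ≫ u = 0 := by
      rw [Category.assoc]; exact kernel.condition _
    rw [← Category.assoc, ← kernel.lift_ι u (kernel.ι (v ≫ u) ≫ v) h1, Category.assoc,
      cokernel.condition, comp_zero]
  obtain ⟨h, hh⟩ := factors_of_isStrict_epi (v ≫ u) hw (v ≫ cokernel.π (kernel.ι u)) hkw
  have hq1 : h ≫ (Abelian.coimageImageComparison u ≫ kernel.ι (cokernel.π u)) = 𝟙 Z := by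
    rw [← cancel_epi (v ≫ u), Category.comp_id, ← Category.assoc, ← hh, Category.assoc,
      fac_epi u]
  -- the pullback of `kernel.ι q` along `cokernel.π (kernel.ι u)` is `kernel u`
  set q := Abelian.coimageImageComparison u ≫ kernel.ι (cokernel.π u) with hqdef
  have hsq : (0 : kernel u ⟶ kernel q) ≫ kernel.ι q = kernel.ι u ≫ cokernel.π (kernel.ι u) := by
    rw [zero_comp, cokernel.condition]
  have pb : IsPullback (0 : kernel u ⟶ kernel q) (kernel.ι u) (kernel.ι q)
      (cokernel.π (kernel.ι u)) := by
    have hu' : cokernel.π (kernel.ι u) ≫ q = u := by rw [hqdef]; exact fac_epi u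
    have hfac : ∀ {A : C} (a : A ⟶ kernel q) (b : A ⟶ Y),
        a ≫ kernel.ι q = b ≫ cokernel.π (kernel.ι u) → b ≫ u = 0 := by
      intro A a b hab
      rw [← hu', ← Category.assoc, ← hab, Category.assoc, kernel.condition, comp_zero]
    refine IsPullback.of_isLimit (PullbackCone.IsLimit.mk hsq
      (fun s => kernel.lift u s.snd (hfac s.fst s.snd s.condition)) (fun s => ?_)
      (fun s => kernel.lift_ι _ _ _) (fun s m hm1 hm2 => ?_))
    · have hs0 : s.fst = 0 := by
        rw [← cancel_mono (kernel.ι q), s.condition, zero_comp,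
          ← kernel.lift_ι u s.snd (hfac s.fst s.snd s.condition), Category.assoc,
          cokernel.condition, comp_zero]
      rw [comp_zero, hs0]
    · rw [← cancel_mono (kernel.ι u), hm2, kernel.lift_ι]
  obtain ⟨h0, -⟩ := QuasiAbelian.pullback_stable _ _ _ _ pb inferInstance
    (cokernel_π_isStrict (kernel.ι u))
  have hkq : kernel.ι q = 0 := by
    haveI := h0
    rw [← cancel_epi (0 : kernel u ⟶ kernel q), zero_comp, comp_zero]
  have hq2 : q ≫ h = 𝟙 (cokernel (kernel.ι u)) := by
    have hδ : (𝟙 (cokernel (kernel.ι u)) - q ≫ h) ≫ q = 0 := by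
      rw [Preadditive.sub_comp, Category.id_comp, Category.assoc, hqdef, hq1,
        Category.comp_id, sub_self]
    have : 𝟙 (cokernel (kernel.ι u)) - q ≫ h = kernel.lift q _ hδ ≫ kernel.ι q :=
      (kernel.lift_ι _ _ _).symm
    rw [hkq, comp_zero, sub_eq_zero] at this
    exact this.symm
  refine ⟨kernel.ι (cokernel.π u) ≫ h, ?_, ?_⟩
  · rw [← Category.assoc]; exact hq2
  · rw [← cancel_mono (kernel.ι (cokernel.π u)), Category.id_comp, Category.assoc,
      Category.assoc, hq1, Category.comp_id]

/-- If `v ≫ u` is a strict mono then `v` is a strict mono. -/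
lemma strictMono_cancel {X Y Z : C} (v : X ⟶ Y) (u : Y ⟶ Z) [Mono (v ≫ u)]
    (hw : IsStrict (v ≫ u)) : IsStrict v := by
  haveI : Mono v := mono_of_mono v u
  have hcw : (kernel.ι (cokernel.π v) ≫ u) ≫ cokernel.π (v ≫ u) = 0 := by
    have h1 : v ≫ (u ≫ cokernel.π (v ≫ u)) = 0 := by
      rw [← Category.assoc]; exact cokernel.condition _
    rw [Category.assoc, ← cokernel.π_desc v (u ≫ cokernel.π (v ≫ u)) h1, ← Category.assoc,
      kernel.condition, zero_comp]
  obtain ⟨h, hh⟩ := factors_of_isStrict_mono (v ≫ u) hw (kernel.ι (cokernel.π v) ≫ u) hcw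
  have hq1 : (cokernel.π (kernel.ι v) ≫ Abelian.coimageImageComparison v) ≫ h = 𝟙 X := by
    rw [← cancel_mono (v ≫ u), Category.id_comp, Category.assoc, ← hh, ← Category.assoc,
      fac_mono v]
  set q := cokernel.π (kernel.ι v) ≫ Abelian.coimageImageComparison v with hqdef
  have hsq : kernel.ι (cokernel.π v) ≫ cokernel.π v
      = cokernel.π q ≫ (0 : cokernel q ⟶ cokernel v) := by
    rw [kernel.condition, comp_zero]
  have po : IsPushout (kernel.ι (cokernel.π v)) (cokernel.π q) (cokernel.π v)
      (0 : cokernel q ⟶ cokernel v) := by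
    have hv' : q ≫ kernel.ι (cokernel.π v) = v := by rw [hqdef]; exact fac_mono v
    have hfac : ∀ {A : C} (a : Y ⟶ A) (b : cokernel q ⟶ A),
        kernel.ι (cokernel.π v) ≫ a = cokernel.π q ≫ b → v ≫ a = 0 := by
      intro A a b hab
      rw [← hv', Category.assoc, hab, ← Category.assoc, cokernel.condition, zero_comp]
    refine IsPushout.of_isColimit (PushoutCocone.IsColimit.mk hsq
      (fun s => cokernel.desc v s.inl (hfac s.inl s.inr s.condition))
      (fun s => cokernel.π_desc _ _ _) (fun s => ?_) (fun s m hm1 hm2 => ?_))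
    · have hs0 : s.inr = 0 := by
        rw [← cancel_epi (cokernel.π q), ← s.condition, comp_zero,
          ← cokernel.π_desc v s.inl (hfac s.inl s.inr s.condition), ← Category.assoc,
          kernel.condition, zero_comp]
      rw [zero_comp, hs0]
    · rw [← cancel_epi (cokernel.π v), hm1, cokernel.π_desc]
  obtain ⟨hm0, -⟩ := QuasiAbelian.pushout_stable _ _ _ _ po inferInstance
    (kernel_ι_isStrict (cokernel.π v))
  have hcq : cokernel.π q = 0 := by
    haveI := hm0
    rw [← cancel_mono (0 : cokernel q ⟶ cokernel v), zero_comp, comp_zero]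
  have hq2 : h ≫ q = 𝟙 (kernel (cokernel.π v)) := by
    have hδ : q ≫ (𝟙 (kernel (cokernel.π v)) - h ≫ q) = 0 := by
      rw [Preadditive.comp_sub, Category.comp_id, ← Category.assoc, hqdef, hq1,
        Category.id_comp, sub_self]
    have : 𝟙 (kernel (cokernel.π v)) - h ≫ q = cokernel.π q ≫ cokernel.desc q _ hδ :=
      (cokernel.π_desc _ _ _).symm
    rw [hcq, zero_comp, sub_eq_zero] at this
    exact this.symm
  refine ⟨h ≫ cokernel.π (kernel.ι v), ?_, ?_⟩
  · rw [← cancel_epi (cokernel.π (kernel.ι v)), Category.comp_id, ← Category.assoc,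
      ← Category.assoc, hq1, Category.id_comp]
  · rw [Category.assoc]; exact hq2

end QAHelpers

/-- in a quasi-abelian category, if `u ∘ v` is a strict monomorphism then `v`
is a strict monomorphism; dually if `u ∘ v` is a strict epimorphism then `u` is a strict
epimorphism.  Moreover the composite of two strict monomorphisms (resp. strict
epimorphisms) is a strict monomorphism (resp. strict epimorphism). -/
theorem quasiAbelian_strict_mono_epi_comp
    (C : Type*) [Category C] [Preadditive C] [QuasiAbelian C] :
    (∀ {X Y Z : C} (v : X ⟶ Y) (u : Y ⟶ Z),
      Mono (v ≫ u) → IsStrict (v ≫ u) → (Mono v ∧ IsStrict v)) ∧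
    (∀ {X Y Z : C} (v : X ⟶ Y) (u : Y ⟶ Z),
      Epi (v ≫ u) → IsStrict (v ≫ u) → (Epi u ∧ IsStrict u)) ∧
    (∀ {X Y Z : C} (v : X ⟶ Y) (u : Y ⟶ Z),
      Mono v → IsStrict v → Mono u → IsStrict u → (Mono (v ≫ u) ∧ IsStrict (v ≫ u))) ∧
    (∀ {X Y Z : C} (v : X ⟶ Y) (u : Y ⟶ Z),
      Epi v → IsStrict v → Epi u → IsStrict u → (Epi (v ≫ u) ∧ IsStrict (v ≫ u))) := by
  refine ⟨?_, ?_, ?_, ?_⟩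
  · intro X Y Z v u hm hs
    haveI := hm
    haveI : Mono v := mono_of_mono v u
    exact ⟨‹Mono v›, QAHelpers.strictMono_cancel v u hs⟩
  · intro X Y Z v u he hs
    haveI := he
    haveI : Epi u := epi_of_epi v u
    exact ⟨‹Epi u›, QAHelpers.strictEpi_cancel v u hs⟩
  · intro X Y Z v u hmv hsv hmu hsu
    haveI := hmv; haveI := hmu
    exact ⟨mono_comp v u, QAHelpers.strictMono_comp v u hsv hsu⟩
  · intro X Y Z v u hev hsv heu hsu
    haveI := hev; haveI := heu
    exact ⟨epi_comp v u, QAHelpers.strictEpi_comp v u hsv hsu⟩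
end

section
/- In a quasi-abelian category, every morphism f : L → L' factors canonically as L ↠ Coim f → Im f ↪ L', where L ↠ Coim f is a strict epimorphism, Im f ↪ L' is a strict monomorphism, and Coim f → Im f is a bimorphism (both a monomorphism and an epimorphism). -/
open CategoryTheory Limits

section Aux

variable {C : Type*} [Category C] [Preadditive C] [HasKernels C] [HasCokernels C]

/-- Every cokernel projection is strict. -/
lemma isStrict_cokernel_π {W X : C} (g : W ⟶ X) : IsStrict (cokernel.π g) := by
  set p : X ⟶ cokernel g := cokernel.π g with hp
  -- `cokernel.π p = 0` since `p` is epi.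
  have hπ0 : cokernel.π p = 0 := by
    rw [← cancel_epi p, cokernel.condition, comp_zero]
  have hι : IsIso (kernel.ι (cokernel.π p)) := equalizer.ι_of_eq hπ0
  -- the map `Coim p ⟶ cokernel g` induced by `p` is an isomorphism.
  set q : Abelian.coimage p ⟶ cokernel g := Abelian.factorThruCoimage p with hq
  have hfac : Abelian.coimage.π p ≫ q = p := Abelian.coimage.fac p
  have hg0 : g ≫ Abelian.coimage.π p = 0 := by
    have h1 : (kernel.lift p g (cokernel.condition g) ≫ kernel.ι p) ≫ Abelian.coimage.π p = 0 := by
      rw [Category.assoc, cokernel.condition, comp_zero]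
    have h2 : kernel.lift p g (cokernel.condition g) ≫ kernel.ι p = g := kernel.lift_ι _ _ _
    exact (congrArg (· ≫ Abelian.coimage.π p) h2).symm.trans h1
  set r : cokernel g ⟶ Abelian.coimage p := cokernel.desc g (Abelian.coimage.π p) hg0 with hr
  have hpr : p ≫ r = Abelian.coimage.π p := by simp [hr, hp]
  have hqr : q ≫ r = 𝟙 _ := by
    rw [← cancel_epi (Abelian.coimage.π p), ← Category.assoc, hfac, hpr, Category.comp_id]
  have hrq : r ≫ q = 𝟙 _ := by
    rw [← cancel_epi p, ← Category.assoc, hpr, hfac, Category.comp_id]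
  have hqiso : IsIso q := ⟨r, hqr, hrq⟩
  -- the comparison composed with the (iso) image inclusion is `q`.
  have key : Abelian.coimageImageComparison p ≫ Abelian.image.ι p = q := by
    rw [← cancel_epi (Abelian.coimage.π p)]
    rw [Abelian.coimage_image_factorisation, hfac]
  have : Abelian.coimageImageComparison p = q ≫ inv (Abelian.image.ι p) := by
    rw [← key]; simp
  rw [IsStrict, this]
  infer_instance

/-- Every kernel inclusion is strict. -/
lemma isStrict_kernel_ι {X Y : C} (g : X ⟶ Y) : IsStrict (kernel.ι g) := by
  set i : kernel g ⟶ X := kernel.ι g with hi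
  have hι0 : kernel.ι i = 0 := by
    rw [← cancel_mono i, kernel.condition, zero_comp]
  have hπ : IsIso (cokernel.π (kernel.ι i)) := coequalizer.π_of_eq hι0
  set q : kernel g ⟶ Abelian.image i := Abelian.factorThruImage i with hq
  have hfac : q ≫ Abelian.image.ι i = i := Abelian.image.fac i
  have hg0 : Abelian.image.ι i ≫ g = 0 := by
    have h1 : Abelian.image.ι i ≫ cokernel.π i ≫ cokernel.desc i g (kernel.condition g) = 0 := by
      rw [← Category.assoc, kernel.condition, zero_comp]
    have h2 : cokernel.π i ≫ cokernel.desc i g (kernel.condition g) = g := cokernel.π_desc _ _ _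
    exact (congrArg (Abelian.image.ι i ≫ ·) h2).symm.trans h1
  set r : Abelian.image i ⟶ kernel g := kernel.lift g (Abelian.image.ι i) hg0 with hr
  have hri : r ≫ i = Abelian.image.ι i := by simp [hr, hi]
  have hqr : q ≫ r = 𝟙 _ := by
    rw [← cancel_mono i, Category.assoc, hri, hfac, Category.id_comp]
  have hrq : r ≫ q = 𝟙 _ := by
    rw [← cancel_mono (Abelian.image.ι i), Category.assoc, hfac, hri, Category.id_comp]
  have hqiso : IsIso q := ⟨r, hqr, hrq⟩
  have key : Abelian.coimage.π i ≫ Abelian.coimageImageComparison i = q := by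
    rw [← cancel_mono (Abelian.image.ι i), Category.assoc,
      Abelian.coimage_image_factorisation, hfac]
  have : Abelian.coimageImageComparison i = inv (Abelian.coimage.π i) ≫ q := by
    rw [← key]; simp
  rw [IsStrict, this]
  infer_instance

end Aux

/-- in a quasi-abelian category, every morphism `f : L ⟶ L'` factors
canonically as `L ↠ Coim f ⟶ Im f ↪ L'`, where `L ⟶ Coim f` is a strict epimorphism,
`Im f ⟶ L'` is a strict monomorphism, and the comparison `Coim f ⟶ Im f` is a bimorphism
(both a monomorphism and an epimorphism). -/
theorem quasiAbelian_canonical_factorization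
    (C : Type*) [Category C] [Preadditive C] [QuasiAbelian C]
    {L L' : C} (f : L ⟶ L') :
    -- `L ⟶ Coim f` is a strict epimorphism:
    (Epi (Abelian.coimage.π f) ∧ IsStrict (Abelian.coimage.π f)) ∧
    -- `Im f ⟶ L'` is a strict monomorphism:
    (Mono (Abelian.image.ι f) ∧ IsStrict (Abelian.image.ι f)) ∧
    -- the canonical comparison is a bimorphism:
    (Mono (Abelian.coimageImageComparison f) ∧ Epi (Abelian.coimageImageComparison f)) ∧
    -- and it factors `f`:
    Abelian.coimage.π f ≫ Abelian.coimageImageComparison f ≫ Abelian.image.ι f = f := by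
  set π : L ⟶ Abelian.coimage f := Abelian.coimage.π f with hπdef
  set ι : Abelian.image f ⟶ L' := Abelian.image.ι f with hιdef
  set c : Abelian.coimage f ⟶ Abelian.image f := Abelian.coimageImageComparison f with hcdef
  have hfac : π ≫ c ≫ ι = f := Abelian.coimage_image_factorisation f
  have hπepi : Epi π := coequalizer.π_epi
  have hπstrict : IsStrict π := isStrict_cokernel_π (kernel.ι f)
  have hιmono : Mono ι := equalizer.ι_mono
  have hιstrict : IsStrict ι := isStrict_kernel_ι (cokernel.π f)
  -- Mono of the comparison.
  have hmono : Mono c := by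
    apply Preadditive.mono_of_cancel_zero
    intro T u hu
    -- it suffices to show `kernel.ι c = 0`.
    suffices hk : kernel.ι c = 0 by
      rw [← kernel.lift_ι c u hu, hk, comp_zero]
    set k : kernel c ⟶ Abelian.coimage f := kernel.ι c with hkdef
    -- construct the pullback of `π` along `k` as a kernel.
    set P := kernel (π ≫ c) with hP
    set snd : P ⟶ L := kernel.ι (π ≫ c) with hsnd
    have hsndc : snd ≫ π ≫ c = 0 := kernel.condition _
    set fst : P ⟶ kernel c := kernel.lift c (snd ≫ π) (by rw [Category.assoc]; exact hsndc)
      with hfst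
    have hcomm : fst ≫ k = snd ≫ π := by simp [hfst, hkdef]
    have hPB : IsPullback fst snd k π := by
      refine IsPullback.of_isLimit' ⟨hcomm⟩ ?_
      refine PullbackCone.IsLimit.mk _ (fun s => kernel.lift (π ≫ c) s.snd ?_)
        (fun s => ?_) (fun s => by simp [hsnd]) (fun s m hm1 hm2 => ?_)
      · rw [← Category.assoc, ← s.condition, Category.assoc, kernel.condition, comp_zero]
      · rw [← cancel_mono k, Category.assoc, hcomm, ← Category.assoc]
        simp [hsnd, s.condition]
      · rw [← cancel_mono (kernel.ι (π ≫ c))]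
        simpa [hsnd] using hm2
    obtain ⟨hfstepi, -⟩ := QuasiAbelian.pullback_stable fst snd k π hPB hπepi hπstrict
    -- `snd ≫ f = 0`, so `snd` factors through `kernel f`.
    have hsndf : snd ≫ f = 0 := by
      rw [← hfac, ← Category.assoc, ← Category.assoc, ← hcomm]
      rw [Category.assoc, Category.assoc]
      have : k ≫ c ≫ ι = 0 := by rw [← Category.assoc, kernel.condition, zero_comp]
      rw [this, comp_zero]
    have hsndπ : snd ≫ π = 0 := by
      have : snd = kernel.lift f snd hsndf ≫ kernel.ι f := by simp
      rw [this, Category.assoc, hπdef, cokernel.condition, comp_zero]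
    rw [← cancel_epi fst, comp_zero, hcomm, hsndπ]
  -- Epi of the comparison.
  have hepi : Epi c := by
    apply Preadditive.epi_of_cancel_zero
    intro T u hu
    suffices hk : cokernel.π c = 0 by
      rw [← cokernel.π_desc c u hu, hk, zero_comp]
    set q : Abelian.image f ⟶ cokernel c := cokernel.π c with hqdef
    set Q := cokernel (c ≫ ι) with hQ
    set inl : L' ⟶ Q := cokernel.π (c ≫ ι) with hinl
    have hinlc : (c ≫ ι) ≫ inl = 0 := cokernel.condition _
    set inr : cokernel c ⟶ Q := cokernel.desc c (ι ≫ inl)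
      (by rw [← Category.assoc]; exact hinlc) with hinr
    have hcomm : ι ≫ inl = q ≫ inr := by simp [hinr, hqdef]
    have hPO : IsPushout ι q inl inr := by
      refine IsPushout.of_isColimit' ⟨hcomm⟩ ?_
      refine PushoutCocone.IsColimit.mk _ (fun s => cokernel.desc (c ≫ ι) s.inl ?_)
        (fun s => by simp [hinl]) (fun s => ?_) (fun s m hm1 hm2 => ?_)
      · rw [Category.assoc, s.condition, ← Category.assoc, cokernel.condition, zero_comp]
      · rw [← cancel_epi q, ← Category.assoc, ← hcomm, Category.assoc]
        simp [hinl, s.condition]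
      · rw [← cancel_epi (cokernel.π (c ≫ ι))]
        simpa [hinl] using hm1
    obtain ⟨hinrmono, -⟩ := QuasiAbelian.pushout_stable ι q inl inr hPO hιmono hιstrict
    have hfinl : f ≫ inl = 0 := by
      have hcq : c ≫ q = 0 := cokernel.condition c
      rw [← hfac, Category.assoc, Category.assoc, hcomm, ← Category.assoc c q inr,
        hcq, zero_comp, comp_zero]
    have hιinl : ι ≫ inl = 0 := by
      have : inl = cokernel.π f ≫ cokernel.desc f inl hfinl := by simp
      rw [this, ← Category.assoc, hιdef, kernel.condition, zero_comp]
    rw [← cancel_mono inr, zero_comp, ← hcomm, hιinl]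
  exact ⟨⟨hπepi, hπstrict⟩, ⟨hιmono, hιstrict⟩, ⟨hmono, hepi⟩, hfac⟩
end
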